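/- arXiv:1301.3115 — 2 statements merged into one kernel-verified Lean document; each statement's English description precedes it below -/
import Mathlib

section
/- Let a group G₀ act on a set M, let H₀ and K₀ be subgroups of G₀, and let z ∈ M. Then the intersection of the H₀-orbit of z with the K₀-orbit of z is a union of at most |Stab_{G₀}(z) ∩ H₀K₀| orbits under the action of H₀ ∩ K₀. More precisely, if u₁, ..., uₙ are elements of Orb_{H₀}(z) ∩ Orb_{K₀}(z) lying in pairwise distinct (H₀ ∩ K₀)-orbits, then n ≤ |Stab_{G₀}(z) ∩ H₀K₀| (where H₀K₀ denotes the set of products hk with h ∈ H₀, k ∈ K₀). -/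
/-! Write `u i = h i • z = k i • z` with `h i ∈ H₀`, `k i ∈ K₀`. Then `(h i)⁻¹ * k i` fixes `z` and
lies in `H₀K₀`, and `i ↦ (h i)⁻¹ * k i` is injective: if `(h i)⁻¹ * k i = (h j)⁻¹ * k j`, then
`h j * (h i)⁻¹ = k j * (k i)⁻¹` lies in `H₀ ⊓ K₀` and carries `u i` to `u j`. -/

section

variable {G M : Type*} [Group G] [MulAction G M]

theorem Subgroup.mul_inv_mem_inf_of_inv_mul_eq {H K : Subgroup G} {h h' k k' : G}
    (hh : h ∈ H) (hh' : h' ∈ H) (hk : k ∈ K) (hk' : k' ∈ K) (heq : h⁻¹ * k = h'⁻¹ * k') :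
    h' * h⁻¹ ∈ H ⊓ K := by
  have hswap : h' * h⁻¹ = k' * k⁻¹ :=
    calc h' * h⁻¹ = h' * (h⁻¹ * k) * k⁻¹ := by group
      _ = k' * k⁻¹ := by rw [heq]; group
  exact ⟨H.mul_mem hh' (H.inv_mem hh), hswap ▸ K.mul_mem hk' (K.inv_mem hk)⟩

theorem inv_mul_smul_eq_self_of_smul_eq {g g' : G} {z u : M} (hg : g • z = u)
    (hg' : g' • z = u) : (g⁻¹ * g') • z = z := by
  rw [mul_smul, hg', ← hg, inv_smul_smul]

theorem injective_inv_mul_of_smul_eq {H K : Subgroup G} {ι : Type*} {z : M} {u : ι → M}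
    {h k : ι → G} (hH : ∀ i, h i ∈ H) (hK : ∀ i, k i ∈ K)
    (hhz : ∀ i, h i • z = u i) (hdist : ∀ i j, i ≠ j → ∀ c ∈ H ⊓ K, c • u i ≠ u j) :
    Function.Injective fun i => (h i)⁻¹ * k i := by
  intro i j heq
  by_contra hne
  refine hdist i j hne _ (H.mul_inv_mem_inf_of_inv_mul_eq (hH i) (hH j) (hK i) (hK j) heq) ?_
  rw [mul_smul, ← hhz i, inv_smul_smul, hhz j]

end

/-- If a group `G₀` acts on a set `M`, `H₀, K₀ ≤ G₀` and `z ∈ M`, then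
`Orb_{H₀}(z) ∩ Orb_{K₀}(z)` is a union of at most `|Stab_{G₀}(z) ∩ H₀K₀|`
orbits under `H₀ ∩ K₀`: any elements `u 0, ..., u (n-1)` of the intersection of
the orbits lying in pairwise distinct `(H₀ ∩ K₀)`-orbits satisfy
`n ≤ |Stab_{G₀}(z) ∩ H₀K₀|`. -/
theorem stmt0 {G₀ M : Type*} [Group G₀] [MulAction G₀ M]
    (H₀ K₀ : Subgroup G₀) (z : M)
    (hfin : {g : G₀ | g • z = z ∧ ∃ h ∈ H₀, ∃ k ∈ K₀, g = h * k}.Finite)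
    (n : ℕ) (u : Fin n → M)
    (hu : ∀ i, (∃ h ∈ H₀, h • z = u i) ∧ (∃ k ∈ K₀, k • z = u i))
    (hdist : ∀ i j, i ≠ j → ∀ c ∈ H₀ ⊓ K₀, c • u i ≠ u j) :
    n ≤ Nat.card {g : G₀ | g • z = z ∧ ∃ h ∈ H₀, ∃ k ∈ K₀, g = h * k} := by
  have : Finite {g : G₀ | g • z = z ∧ ∃ h ∈ H₀, ∃ k ∈ K₀, g = h * k} := hfin
  choose h hH hhz using fun i => (hu i).1
  choose k hK hkz using fun i => (hu i).2
  let f : Fin n → {g : G₀ | g • z = z ∧ ∃ h ∈ H₀, ∃ k ∈ K₀, g = h * k} := fun i =>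
    ⟨(h i)⁻¹ * k i, inv_mul_smul_eq_self_of_smul_eq (hhz i) (hkz i),
      (h i)⁻¹, H₀.inv_mem (hH i), k i, hK i, rfl⟩
  have hf : Function.Injective f := fun i j hij =>
    injective_inv_mul_of_smul_eq hH hK hhz hdist (congrArg Subtype.val hij)
  simpa using Nat.card_le_card_of_injective f hf
end

section
/- For any two integers a ≥ 2 and b ≥ 2 with a ≤ b, and any positive integer m, and any nonnegative integers d₁, ..., d_s satisfying d_i ≤ a for all i and Σ d_i ≤ m·a·b, the inequality Σ_{i=1}^{s} (d_i − 2) ≤ 3m·(a−2)·(b−2) holds provided that additionally either s ≤ m·b or s ≥ m·b (i.e. unconditionally). -/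
/-! Each `d` with `d ≤ a` satisfies `a (d - 2) ≤ (a - 2) d`, so summing and using `∑ dᵢ ≤ m a b`
gives `∑ (dᵢ - 2) ≤ m b (a - 2)`. This is at most `3 m (a - 2)(b - 2)`: trivially if `a = 2`,
and because `b ≤ 3 (b - 2)` once `b ≥ a ≥ 3`. -/

open Finset

section OrderedRing

variable {R ι : Type*} [CommRing R] [LinearOrder R] [IsStrictOrderedRing R]

theorem mul_sum_sub_two_le {s : Finset ι} {d : ι → R} {a : R} (hda : ∀ i ∈ s, d i ≤ a) :
    a * ∑ i ∈ s, (d i - 2) ≤ (a - 2) * ∑ i ∈ s, d i := by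
  rw [mul_sum, mul_sum]
  exact sum_le_sum fun i hi => by linear_combination 2 * hda i hi

theorem sum_sub_two_le_of_sum_le {s : Finset ι} {d : ι → R} {a b m : R} (ha : 2 ≤ a)
    (hda : ∀ i ∈ s, d i ≤ a) (hsum : ∑ i ∈ s, d i ≤ m * a * b) :
    ∑ i ∈ s, (d i - 2) ≤ m * b * (a - 2) := by
  refine le_of_mul_le_mul_left ?_ (by linarith : 0 < a)
  calc a * ∑ i ∈ s, (d i - 2) ≤ (a - 2) * ∑ i ∈ s, d i := mul_sum_sub_two_le hda
    _ ≤ (a - 2) * (m * a * b) := mul_le_mul_of_nonneg_left hsum (by linarith)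
    _ = a * (m * b * (a - 2)) := by ring

end OrderedRing

theorem Int.mul_mul_sub_two_le {a b m : ℤ} (ha : 2 ≤ a) (hab : a ≤ b) (hm : 0 ≤ m) :
    m * b * (a - 2) ≤ 3 * m * ((a - 2) * (b - 2)) := by
  obtain rfl | ha3 := ha.eq_or_lt
  · simp
  have hma : 0 ≤ m * (a - 2) := mul_nonneg hm (by omega)
  nlinarith [mul_le_mul_of_nonneg_left (by omega : b ≤ 3 * (b - 2)) hma]

theorem stmt3_general (a b m : ℤ) (ha : 2 ≤ a) (hab : a ≤ b) (hm : 1 ≤ m)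
    (s : ℕ) (d : Fin s → ℤ) (hda : ∀ i, d i ≤ a)
    (hsum : ∑ i, d i ≤ m * a * b) :
    ∑ i, (d i - 2) ≤ 3 * m * ((a - 2) * (b - 2)) :=
  (sum_sub_two_le_of_sum_le ha (fun i _ => hda i) hsum).trans
    (Int.mul_mul_sub_two_le ha hab (by omega))

/-- For integers `a, b ≥ 2` with `a ≤ b`, a positive integer `m`, and
nonnegative integers `d₁, ..., d_s` with `d i ≤ a` and `∑ d i ≤ m·a·b`, one has
`∑ (d i − 2) ≤ 3m·(a−2)·(b−2)`. -/
theorem stmt3 (a b m : ℤ) (ha : 2 ≤ a) (hab : a ≤ b) (hm : 1 ≤ m)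
    (s : ℕ) (d : Fin s → ℤ) (hd0 : ∀ i, 0 ≤ d i) (hda : ∀ i, d i ≤ a)
    (hsum : ∑ i, d i ≤ m * a * b) :
    ∑ i, (d i - 2) ≤ 3 * m * ((a - 2) * (b - 2)) :=
  stmt3_general a b m ha hab hm s d hda hsum
end
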